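/- arXiv:1112.6069 — 2 statements merged into one kernel-verified Lean document; each statement's English description precedes it below -/
import Mathlib

section
/- Let A be a C*-algebra and x ∈ A an element lying in the Pedersen ideal of A (e.g., x = exe for a positive e ∈ A). If f ∈ A₊ is a full element (the closed two-sided ideal generated by f is all of A), then x can be written as a finite sum x = ∑_{i=1}^m aᵢ f bᵢ with aᵢ, bᵢ ∈ A. -/
/-!
Let `J` be the algebraic ideal of finite sums `∑ aᵢ f bᵢ`. Along an approximate unit `u`,
`u f v → u f` and `u f → f`, so `f` lies in the closed ideal `J̄`; by fullness `J̄ = A`, hence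
`e ∈ J̄`. Pick `c ∈ J` with `‖c - e‖ < 1`; then `1 + (c - e)` is invertible in the unitization and
`(1 + (c - e)) x = c x ∈ J` because `e x = x`, so `x = (1 + (c - e))⁻¹ c x ∈ J`.
-/

open Filter

namespace TwoSidedIdeal

section Sandwich

variable {R : Type*} [NonUnitalRing R]

-- In a non-unital ring this is smaller than `span {f}`: it need not contain `f` itself.
def sandwich (f : R) : TwoSidedIdeal R :=
  .mk' {z | ∃ (m : ℕ) (a b : Fin m → R), z = ∑ i, a i * f * b i}
    ⟨0, ![], ![], by simp⟩
    (by
      rintro _ _ ⟨m, a, b, rfl⟩ ⟨n, c, d, rfl⟩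
      exact ⟨m + n, Fin.append a c, Fin.append b d, by simp [Fin.sum_univ_add]⟩)
    (by
      rintro _ ⟨m, a, b, rfl⟩
      exact ⟨m, -a, b, by simp [Finset.sum_neg_distrib]⟩)
    (by
      rintro y _ ⟨m, a, b, rfl⟩
      exact ⟨m, fun i ↦ y * a i, b, by simp [Finset.mul_sum, mul_assoc]⟩)
    (by
      rintro _ y ⟨m, a, b, rfl⟩
      exact ⟨m, a, fun i ↦ b i * y, by simp [Finset.sum_mul, mul_assoc]⟩)

lemma mem_sandwich {f z : R} :
    z ∈ sandwich f ↔ ∃ (m : ℕ) (a b : Fin m → R), z = ∑ i, a i * f * b i :=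
  mem_mk' ..

lemma mul_mul_mem_sandwich (a f b : R) : a * f * b ∈ sandwich f :=
  mem_sandwich.mpr ⟨1, ![a], ![b], by simp⟩

lemma mem_of_mul_eq_of_isQuasiregular_sub (J : TwoSidedIdeal R) {c e x : R} (hc : c ∈ J)
    (hex : e * x = x) (hce : IsQuasiregular (c - e)) : x ∈ J := by
  obtain ⟨y, -, hy⟩ := isQuasiregular_iff.mp hce
  have hx : x = c * x + y * (c * x) :=
    calc x = x + (c - e + y + y * (c - e)) * x := by rw [hy, zero_mul, add_zero]
      _ = c * x + y * (c * x) := by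
        simp only [add_mul, sub_mul, mul_sub, mul_assoc, hex]
        abel
  rw [hx]
  exact J.add_mem (J.mul_mem_right c x hc) (J.mul_mem_left y _ (J.mul_mem_right c x hc))

end Sandwich

section Closure

variable {R : Type*} [NonUnitalRing R] [TopologicalSpace R] [IsTopologicalRing R]

def topologicalClosure (I : TwoSidedIdeal R) : TwoSidedIdeal R :=
  .mk' (closure I) (subset_closure I.zero_mem)
    (fun hx hy ↦ map_mem_closure₂ continuous_add hx hy fun _ ha _ hb ↦ I.add_mem ha hb)
    (fun hx ↦ map_mem_closure continuous_neg hx fun _ ha ↦ I.neg_mem ha)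
    (fun {y _} hz ↦ map_mem_closure (continuous_const_mul y) hz fun _ ha ↦ I.mul_mem_left y _ ha)
    (fun {_ y} hz ↦ map_mem_closure (f := (· * y)) (continuous_mul_const y) hz
      fun _ ha ↦ I.mul_mem_right _ y ha)

lemma coe_topologicalClosure (I : TwoSidedIdeal R) :
    (I.topologicalClosure : Set R) = closure I := by
  rw [topologicalClosure, coe_mk']

lemma isClosed_topologicalClosure (I : TwoSidedIdeal R) :
    IsClosed (I.topologicalClosure : Set R) := by
  rw [coe_topologicalClosure]
  exact isClosed_closure

lemma self_mem_topologicalClosure_sandwich {l : Filter R} (hl : l.IsApproximateUnit) (f : R) :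
    f ∈ (sandwich f).topologicalClosure := by
  have := hl.neBot
  rw [← SetLike.mem_coe, coe_topologicalClosure, ← closure_closure]
  have hleft (u : R) : u * f ∈ closure (sandwich f : Set R) :=
    mem_closure_of_tendsto (hl.tendsto_mul_left (u * f))
      (Eventually.of_forall fun v ↦ mul_mul_mem_sandwich u f v)
  exact mem_closure_of_tendsto (hl.tendsto_mul_right f) (Eventually.of_forall hleft)

end Closure

end TwoSidedIdeal

section Banach

variable {A : Type*} [NonUnitalNormedRing A] [CompleteSpace A]

lemma isQuasiregular_of_norm_lt_one (𝕜 : Type*) [NontriviallyNormedField 𝕜] [CompleteSpace 𝕜]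
    [NormedSpace 𝕜 A] [IsScalarTower 𝕜 A A] [SMulCommClass 𝕜 A A] [RegularNormedAlgebra 𝕜 A]
    {t : A} (ht : ‖t‖ < 1) : IsQuasiregular t := by
  rw [isQuasiregular_iff_isUnit' 𝕜]
  have hnorm : ‖-(t : Unitization 𝕜 A)‖ < 1 := by rwa [norm_neg, Unitization.norm_inr]
  simpa using isUnit_one_sub_of_norm_lt_one hnorm

lemma TwoSidedIdeal.mem_of_mul_eq_of_mem_closure (𝕜 : Type*) [NontriviallyNormedField 𝕜]
    [CompleteSpace 𝕜] [NormedSpace 𝕜 A] [IsScalarTower 𝕜 A A] [SMulCommClass 𝕜 A A]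
    [RegularNormedAlgebra 𝕜 A] (J : TwoSidedIdeal A) {e x : A}
    (he : e ∈ closure (J : Set A)) (hex : e * x = x) : x ∈ J := by
  obtain ⟨c, hc, hce⟩ := Metric.mem_closure_iff.mp he 1 one_pos
  refine J.mem_of_mul_eq_of_isQuasiregular_sub hc hex (isQuasiregular_of_norm_lt_one 𝕜 ?_)
  rwa [← dist_eq_norm, dist_comm]

end Banach

theorem stmt_9_general {A : Type*} [NonUnitalCStarAlgebra A] [PartialOrder A] [StarOrderedRing A]
    (x : A) (e : A) (hex : e * x = x)
    (f : A)
    (hfull : ∀ I : TwoSidedIdeal A, IsClosed (I : Set A) → f ∈ I → ∀ y : A, y ∈ I) :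
    ∃ (m : ℕ) (a b : Fin m → A), x = ∑ i, a i * f * b i := by
  set J := TwoSidedIdeal.sandwich f
  have hf : f ∈ J.topologicalClosure :=
    TwoSidedIdeal.self_mem_topologicalClosure_sandwich
      (CStarAlgebra.increasingApproximateUnit A).toIsApproximateUnit f
  have he : e ∈ closure (J : Set A) := by
    rw [← J.coe_topologicalClosure]
    exact hfull _ J.isClosed_topologicalClosure hf e
  exact TwoSidedIdeal.mem_sandwich.mp (J.mem_of_mul_eq_of_mem_closure ℂ he hex)

/-- If `x` lies in the Pedersen ideal of a C*-algebra `A` (e.g. `e x = x e = x` for some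
positive `e`), and `f` is a full positive element (the closed two-sided ideal generated
by `f` is all of `A`), then `x = ∑_{i=1}^m aᵢ f bᵢ` for some `aᵢ, bᵢ ∈ A`. -/
theorem stmt_9 {A : Type*} [NonUnitalCStarAlgebra A] [PartialOrder A] [StarOrderedRing A]
    (x : A) (e : A) (he : 0 ≤ e) (hex : e * x = x) (hxe : x * e = x)
    (f : A) (hf : 0 ≤ f)
    (hfull : ∀ I : TwoSidedIdeal A, IsClosed (I : Set A) → f ∈ I → ∀ y : A, y ∈ I) :
    ∃ (m : ℕ) (a b : Fin m → A), x = ∑ i, a i * f * b i :=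
  stmt_9_general x e hex f hfull
end

section
/- Let A be a C*-algebra in which every element is a limit of products of two nilpotent elements. Then in the unitization A~, every element of A is a limit of invertible elements of A~. -/
open Filter Topology

theorem IsNilpotent.mem_closure_setOf_isUnit (𝕜 : Type*) {R : Type*} [NontriviallyNormedField 𝕜]
    [Ring R] [Algebra 𝕜 R] [TopologicalSpace R] [ContinuousAdd R] [ContinuousSMul 𝕜 R] {a : R}
    (ha : IsNilpotent a) : a ∈ closure {u : R | IsUnit u} := by
  have hlim : Tendsto (fun c : 𝕜 => a + algebraMap 𝕜 R c) (𝓝[≠] 0) (𝓝 a) := by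
    simpa using tendsto_const_nhds.add
      ((continuous_algebraMap 𝕜 R).tendsto 0 |>.mono_left nhdsWithin_le_nhds)
  refine mem_closure_of_tendsto hlim (eventually_nhdsWithin_of_forall fun c hc => ?_)
  exact ha.isUnit_add_right_of_commute ((IsUnit.mk0 c hc).map _) (Algebra.commutes c a).symm

theorem mul_mem_closure_setOf_isUnit {M : Type*} [Monoid M] [TopologicalSpace M] [ContinuousMul M]
    {a b : M} (ha : a ∈ closure {u : M | IsUnit u}) (hb : b ∈ closure {u : M | IsUnit u}) :
    a * b ∈ closure {u : M | IsUnit u} :=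
  (IsUnit.submonoid M).topologicalClosure.mul_mem ha hb

open Filter in
/-- If every element of a C*-algebra `A` is a limit of products of two nilpotent
elements, then every element of `A` is a limit of invertible elements of the
unitization `A⁺`. (Nilpotency of an element of the possibly non-unital algebra `A`
is expressed via its image in the unitization.) -/
theorem stmt_12 {A : Type*} [NonUnitalCStarAlgebra A]
    (h : ∀ x : A, ∃ y z : ℕ → A,
      (∀ n, IsNilpotent (y n : Unitization ℂ A)) ∧
      (∀ n, IsNilpotent (z n : Unitization ℂ A)) ∧
      Tendsto (fun n => y n * z n) atTop (nhds x)) :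
    ∀ x : A, (x : Unitization ℂ A) ∈ closure {u : Unitization ℂ A | IsUnit u} := by
  intro x
  obtain ⟨y, z, hy, hz, hlim⟩ := h x
  have hprod : ∀ n, ((y n * z n : A) : Unitization ℂ A) ∈ closure {u | IsUnit u} := fun n => by
    rw [Unitization.inr_mul]
    exact mul_mem_closure_setOf_isUnit ((hy n).mem_closure_setOf_isUnit ℂ)
      ((hz n).mem_closure_setOf_isUnit ℂ)
  exact isClosed_closure.mem_of_tendsto
    ((Unitization.continuous_inr (𝕜 := ℂ)).tendsto x |>.comp hlim) (Eventually.of_forall hprod)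
end
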